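/- For every p ∈ (0,1) and z ∈ ℂ⁻, the identity p z (1 - z)^{p-1} = p sin((1-p)π) ∫_{(0,1)} (1/(1 - xz) - 1) · 1/(π x^{1+p} (1 - x)^{1-p}) dx holds, with principal branch powers. -/

import Mathlib

/-!
For real `s < 1` the substitution `x = y / (1 - s + y s)` gives
`∫₀¹ x^{-p} (1-x)^{p-1} / (1 - x s) dx = (1-s)^{p-1} B(1-p, p) = (1-s)^{p-1} π / sin (π p)`.
With `s` replaced by a complex `z`, both sides are holomorphic on `ℂ ∖ [1, ∞)`, where
`1 - x z = (1 - x) + x (1 - z)` stays in the slit plane for `x ∈ [0, 1]`; the identity theorem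
then extends the formula to all such `z`, in particular to the lower half-plane. Since `1/(1 - x z) - 1 = x z/(1 - x z)`,
the integral in the theorem is `z / π` times the left-hand side.
-/

open MeasureTheory Set Filter Topology Metric
open Complex (slitPlane)

lemma cpow_mul_one_sub_cpow_ofReal {x : ℝ} (hx : x ∈ Icc (0 : ℝ) 1) (a b : ℝ) :
    (x : ℂ) ^ ((a : ℂ) - 1) * (1 - (x : ℂ)) ^ ((b : ℂ) - 1)
      = ((x ^ (a - 1) * (1 - x) ^ (b - 1) : ℝ) : ℂ) := by
  rw [Complex.ofReal_mul, Complex.ofReal_cpow hx.1, Complex.ofReal_cpow (sub_nonneg.2 hx.2)]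
  push_cast
  rfl

lemma integrableOn_rpow_mul_one_sub_rpow {a b : ℝ} (ha : 0 < a) (hb : 0 < b) :
    IntegrableOn (fun x : ℝ ↦ x ^ (a - 1) * (1 - x) ^ (b - 1)) (Ioo 0 1) := by
  have hC : IntegrableOn
      (fun x : ℝ ↦ (x : ℂ) ^ ((a : ℂ) - 1) * (1 - (x : ℂ)) ^ ((b : ℂ) - 1)) (Ioc 0 1) :=
    (intervalIntegrable_iff_integrableOn_Ioc_of_le zero_le_one).mp
      (Complex.betaIntegral_convergent (by simpa) (by simpa))
  refine IntegrableOn.congr_fun (hC.mono_set Ioo_subset_Ioc_self).re (fun x hx ↦ ?_)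
    measurableSet_Ioo
  rw [cpow_mul_one_sub_cpow_ofReal (Ioo_subset_Icc_self hx)]
  rfl

lemma integral_rpow_mul_one_sub_rpow {a b : ℝ} (ha : 0 < a) (hb : 0 < b) :
    ∫ x in Ioo (0 : ℝ) 1, x ^ (a - 1) * (1 - x) ^ (b - 1) = ProbabilityTheory.beta a b := by
  have hB : Complex.betaIntegral a b
      = ((∫ x in Ioo (0 : ℝ) 1, x ^ (a - 1) * (1 - x) ^ (b - 1) : ℝ) : ℂ) := by
    rw [Complex.betaIntegral, intervalIntegral.integral_of_le zero_le_one,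
      integral_Ioc_eq_integral_Ioo, ← integral_complex_ofReal]
    refine setIntegral_congr_fun measurableSet_Ioo (fun x hx ↦ ?_)
    exact cpow_mul_one_sub_cpow_ofReal (Ioo_subset_Icc_self hx) a b
  have hGamma := Complex.Gamma_mul_Gamma_eq_betaIntegral (s := a) (t := b) (by simpa) (by simpa)
  rw [hB, ← Complex.ofReal_add] at hGamma
  simp only [Complex.Gamma_ofReal] at hGamma
  norm_cast at hGamma
  rw [ProbabilityTheory.beta, hGamma,
    mul_div_cancel_left₀ _ (Real.Gamma_pos_of_pos (add_pos ha hb)).ne']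

lemma beta_one_sub_self (p : ℝ) :
    ProbabilityTheory.beta (1 - p) p = Real.pi / Real.sin (Real.pi * p) := by
  rw [ProbabilityTheory.beta, sub_add_cancel, Real.Gamma_one, div_one, mul_comm,
    Real.Gamma_mul_Gamma_one_sub]

section Substitution

variable {s : ℝ}

lemma one_sub_mul_pos (hs : s < 1) {x : ℝ} (hx : x ∈ Icc (0 : ℝ) 1) : 0 < 1 - x * s := by
  rcases le_or_gt s 0 with h | h <;> nlinarith [hx.1, hx.2]

lemma one_sub_add_mul_pos (hs : s < 1) {y : ℝ} (hy : y ∈ Icc (0 : ℝ) 1) :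
    0 < 1 - s + y * s := by
  linarith [one_sub_mul_pos hs (x := 1 - y) ⟨by linarith [hy.2], by linarith [hy.1]⟩]

lemma image_div_one_sub_add_mul_Ioo (hs : s < 1) :
    (fun y ↦ y / (1 - s + y * s)) '' Ioo 0 1 = Ioo 0 1 := by
  refine Subset.antisymm ?_ (fun x hx ↦ ?_)
  · rintro _ ⟨y, hy, rfl⟩
    have hD := one_sub_add_mul_pos hs (Ioo_subset_Icc_self hy)
    exact ⟨div_pos hy.1 hD, (div_lt_one hD).2 (by nlinarith [hy.1, hy.2])⟩
  · have hd := one_sub_mul_pos hs (Ioo_subset_Icc_self hx)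
    refine ⟨x * (1 - s) / (1 - x * s),
      ⟨div_pos (mul_pos hx.1 (by linarith)) hd, (div_lt_one hd).2 (by nlinarith [hx.2])⟩, ?_⟩
    have h1s : 1 - s ≠ 0 := by linarith
    field_simp
    ring

lemma injOn_div_one_sub_add_mul (hs : s < 1) :
    InjOn (fun y ↦ y / (1 - s + y * s)) (Ioo 0 1) := by
  intro a ha b hb h
  have hDa := one_sub_add_mul_pos hs (Ioo_subset_Icc_self ha)
  have hDb := one_sub_add_mul_pos hs (Ioo_subset_Icc_self hb)
  rw [div_eq_div_iff hDa.ne' hDb.ne'] at h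
  nlinarith

lemma hasDerivAt_div_one_sub_add_mul (hs : s < 1) {y : ℝ} (hy : y ∈ Icc (0 : ℝ) 1) :
    HasDerivAt (fun y ↦ y / (1 - s + y * s)) ((1 - s) / (1 - s + y * s) ^ 2) y := by
  have hD := one_sub_add_mul_pos hs hy
  refine ((hasDerivAt_id' y).div (((hasDerivAt_id' y).mul_const s).const_add (1 - s)) hD.ne')
    |>.congr_deriv ?_
  ring

lemma abs_deriv_smul_rpow_neg_mul_one_sub_rpow_div_comp (p : ℝ) (hs : s < 1) {y : ℝ}
    (hy : y ∈ Ioo (0 : ℝ) 1) :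
    |(1 - s) / (1 - s + y * s) ^ 2| •
        ((y / (1 - s + y * s)) ^ (-p) * (1 - y / (1 - s + y * s)) ^ (p - 1)
          / (1 - y / (1 - s + y * s) * s))
      = (1 - s) ^ (p - 1) * (y ^ (-p) * (1 - y) ^ (p - 1)) := by
  set D := 1 - s + y * s with hDdef
  have hD : 0 < D := one_sub_add_mul_pos hs (Ioo_subset_Icc_self hy)
  have h1s : 0 < 1 - s := by linarith
  have h1y : 0 < 1 - y := by linarith [hy.2]
  have hx : 1 - y / D = (1 - s) * (1 - y) / D := by field_simp; ring
  have hxs : 1 - y / D * s = (1 - s) / D := by field_simp; ring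
  rw [hx, hxs, smul_eq_mul, abs_of_pos (by positivity), Real.div_rpow hy.1.le hD.le,
    Real.div_rpow (by positivity) hD.le, Real.mul_rpow h1s.le h1y.le, Real.rpow_neg hD.le,
    Real.rpow_sub_one hD.ne', Real.rpow_sub_one h1s.ne', Real.rpow_sub_one h1y.ne',
    Real.rpow_neg hy.1.le]
  field_simp

lemma integral_rpow_neg_mul_one_sub_rpow_div_one_sub_mul (p : ℝ) (hs : s < 1) :
    ∫ x in Ioo (0 : ℝ) 1, x ^ (-p) * (1 - x) ^ (p - 1) / (1 - x * s)
      = (1 - s) ^ (p - 1) * ∫ x in Ioo (0 : ℝ) 1, x ^ (-p) * (1 - x) ^ (p - 1) := by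
  conv_lhs => rw [← image_div_one_sub_add_mul_Ioo hs]
  rw [integral_image_eq_integral_abs_deriv_smul measurableSet_Ioo
      (fun y hy ↦ (hasDerivAt_div_one_sub_add_mul hs (Ioo_subset_Icc_self hy)).hasDerivWithinAt)
      (injOn_div_one_sub_add_mul hs), ← integral_const_mul]
  exact setIntegral_congr_fun measurableSet_Ioo
    (fun y hy ↦ abs_deriv_smul_rpow_neg_mul_one_sub_rpow_div_comp p hs hy)

end Substitution

lemma one_sub_ofReal_mul_mem_slitPlane {z : ℂ} (hz : 1 - z ∈ slitPlane) {x : ℝ}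
    (hx : x ∈ Icc (0 : ℝ) 1) : 1 - x * z ∈ slitPlane := by
  have := Complex.starConvex_one_slitPlane.add_smul_mem (y := -z) (by rwa [← sub_eq_add_neg])
    hx.1 hx.2
  rwa [Complex.real_smul, mul_neg, ← sub_eq_add_neg] at this

lemma starConvex_zero_setOf_one_sub_mem_slitPlane :
    StarConvex ℝ 0 {z : ℂ | 1 - z ∈ slitPlane} := by
  intro z hz a t _ ht _
  rw [smul_zero, zero_add, Complex.real_smul]
  exact one_sub_ofReal_mul_mem_slitPlane hz ⟨ht, by linarith⟩

lemma exists_pos_forall_le_norm_one_sub_mul {z₀ : ℂ} (hz₀ : 1 - z₀ ∈ slitPlane) :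
    ∃ δ > 0, ∀ x ∈ Icc (0 : ℝ) 1, ∀ z ∈ ball z₀ δ, δ ≤ ‖1 - x * z‖ := by
  obtain ⟨x₀, hx₀, hmin⟩ := isCompact_Icc.exists_isMinOn (nonempty_Icc.2 zero_le_one)
    (f := fun x : ℝ ↦ ‖1 - x * z₀‖) (by fun_prop)
  set m := ‖1 - x₀ * z₀‖
  have hm : 0 < m := norm_pos_iff.2 (Complex.slitPlane_ne_zero
    (one_sub_ofReal_mul_mem_slitPlane hz₀ hx₀))
  refine ⟨m / 2, half_pos hm, fun x hx z hz ↦ ?_⟩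
  have hxz : ‖(x : ℂ) * (z - z₀)‖ ≤ m / 2 := by
    rw [norm_mul, Complex.norm_real, Real.norm_of_nonneg hx.1]
    exact (mul_le_of_le_one_left (norm_nonneg _) hx.2).trans (mem_ball_iff_norm.1 hz).le
  have := norm_sub_norm_le (1 - x * z₀) (x * (z - z₀))
  calc m / 2 ≤ m - ‖(x : ℂ) * (z - z₀)‖ := by linarith
    _ ≤ ‖1 - x * z₀‖ - ‖(x : ℂ) * (z - z₀)‖ := by gcongr; exact hmin hx
    _ ≤ ‖1 - x * z‖ := by
      refine (norm_sub_norm_le _ _).trans_eq ?_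
      ring_nf

lemma differentiableOn_integral_div_one_sub_mul {f : ℝ → ℂ} (hf : IntegrableOn f (Ioo 0 1)) :
    DifferentiableOn ℂ (fun z ↦ ∫ x in Ioo (0 : ℝ) 1, f x / (1 - x * z))
      {z : ℂ | 1 - z ∈ slitPlane} := by
  intro z₀ hz₀
  obtain ⟨δ, hδ, hle⟩ := exists_pos_forall_le_norm_one_sub_mul hz₀
  have hne : ∀ x ∈ Ioo (0 : ℝ) 1, ∀ z ∈ ball z₀ δ, (1 : ℂ) - x * z ≠ 0 :=
    fun x hx z hz ↦
    norm_pos_iff.1 (hδ.trans_le (hle x (Ioo_subset_Icc_self hx) z hz))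
  have hmeas : ∀ z, AEStronglyMeasurable (fun x : ℝ ↦ f x / (1 - x * z))
      (volume.restrict (Ioo 0 1)) := fun z ↦
    hf.aestronglyMeasurable.mul
      (by fun_prop : Measurable fun x : ℝ ↦ (1 - x * z)⁻¹).aestronglyMeasurable
  have hderiv := hasDerivAt_integral_of_dominated_loc_of_deriv_le (ball_mem_nhds z₀ hδ)
    (F := fun z x ↦ f x / (1 - x * z)) (F' := fun z x ↦ f x * (x / (1 - x * z) ^ 2))
    (bound := fun x ↦ ‖f x‖ / δ ^ 2) (Eventually.of_forall hmeas) ?_ ?_ ?_ ?_ ?_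
  · exact hderiv.2.differentiableAt.differentiableWithinAt
  · refine (hf.norm.div_const δ).mono' (hmeas z₀) (ae_restrict_of_forall_mem measurableSet_Ioo
      fun x hx ↦ ?_)
    rw [norm_div]
    gcongr
    exact hle x (Ioo_subset_Icc_self hx) z₀ (mem_ball_self hδ)
  · exact hf.aestronglyMeasurable.mul (by fun_prop : Measurable fun x : ℝ ↦
      (x : ℂ) / (1 - x * z₀) ^ 2).aestronglyMeasurable
  · refine ae_restrict_of_forall_mem measurableSet_Ioo fun x hx z hz ↦ ?_
    rw [norm_mul, norm_div, norm_pow, Complex.norm_real, Real.norm_of_nonneg hx.1.le, mul_div,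
      mul_comm]
    gcongr
    · exact mul_le_of_le_one_left (norm_nonneg _) hx.2.le
    · exact hle x (Ioo_subset_Icc_self hx) z hz
  · exact hf.norm.div_const _
  · refine ae_restrict_of_forall_mem measurableSet_Ioo fun x hx z hz ↦ ?_
    have hlin : HasDerivAt (fun z : ℂ ↦ 1 - x * z) (-x) z := by
      simpa using ((hasDerivAt_id z).const_mul (x : ℂ)).const_sub 1
    refine ((hasDerivAt_const z (f x)).div hlin (hne x hx z hz)).congr_deriv ?_
    ring

section Kernel

variable {p : ℝ}

lemma integrableOn_rpow_neg_mul_one_sub_rpow (hp : p ∈ Ioo (0 : ℝ) 1) :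
    IntegrableOn (fun x : ℝ ↦ x ^ (-p) * (1 - x) ^ (p - 1)) (Ioo 0 1) := by
  simpa using integrableOn_rpow_mul_one_sub_rpow (sub_pos.2 hp.2) hp.1

lemma integral_rpow_neg_mul_one_sub_rpow (hp : p ∈ Ioo (0 : ℝ) 1) :
    ∫ x in Ioo (0 : ℝ) 1, x ^ (-p) * (1 - x) ^ (p - 1) = Real.pi / Real.sin (Real.pi * p) := by
  simpa [beta_one_sub_self] using integral_rpow_mul_one_sub_rpow (sub_pos.2 hp.2) hp.1

lemma integral_rpow_neg_mul_one_sub_rpow_div_one_sub_ofReal_mul (hp : p ∈ Ioo (0 : ℝ) 1)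
    {s : ℝ} (hs : s < 1) :
    ∫ x in Ioo (0 : ℝ) 1, ((x ^ (-p) * (1 - x) ^ (p - 1) : ℝ) : ℂ) / (1 - x * (s : ℂ))
      = ((Real.pi / Real.sin (Real.pi * p) : ℝ) : ℂ) * (1 - (s : ℂ)) ^ ((p : ℂ) - 1) := by
  have hcast : ∀ x : ℝ, ((x ^ (-p) * (1 - x) ^ (p - 1) : ℝ) : ℂ) / (1 - x * (s : ℂ))
      = ((x ^ (-p) * (1 - x) ^ (p - 1) / (1 - x * s) : ℝ) : ℂ) := fun x ↦ by push_cast; rfl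
  simp_rw [hcast]
  rw [integral_complex_ofReal, integral_rpow_neg_mul_one_sub_rpow_div_one_sub_mul p hs,
    integral_rpow_neg_mul_one_sub_rpow hp, mul_comm, Complex.ofReal_mul,
    Complex.ofReal_cpow (by linarith)]
  push_cast
  rfl

lemma integral_rpow_neg_mul_one_sub_rpow_div_one_sub_mul_eq_cpow (hp : p ∈ Ioo (0 : ℝ) 1)
    {z : ℂ} (hz : 1 - z ∈ slitPlane) :
    ∫ x in Ioo (0 : ℝ) 1, ((x ^ (-p) * (1 - x) ^ (p - 1) : ℝ) : ℂ) / (1 - x * z)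
      = ((Real.pi / Real.sin (Real.pi * p) : ℝ) : ℂ) * (1 - z) ^ ((p : ℂ) - 1) := by
  set U := {z : ℂ | 1 - z ∈ slitPlane}
  have hU : IsOpen U := Complex.isOpen_slitPlane.preimage (by fun_prop)
  have hlhs := (differentiableOn_integral_div_one_sub_mul
    (integrableOn_rpow_neg_mul_one_sub_rpow hp).ofReal).analyticOnNhd hU
  have hrhs : AnalyticOnNhd ℂ (fun z : ℂ ↦
      ((Real.pi / Real.sin (Real.pi * p) : ℝ) : ℂ) * (1 - z) ^ ((p : ℂ) - 1)) U :=
    DifferentiableOn.analyticOnNhd (fun w hw ↦ ((differentiableAt_const _).mul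
      (((differentiableAt_const 1).sub differentiableAt_id).cpow_const hw)).differentiableWithinAt)
      hU
  have h0 : (0 : ℂ) ∈ U := by simp [U]
  refine hlhs.eqOn_of_preconnected_of_frequently_eq hrhs
    (starConvex_zero_setOf_one_sub_mem_slitPlane.isPathConnected h0).isConnected.isPreconnected
    h0 ?_ hz
  -- the two sides agree at all real `s < 1`, and these accumulate at `0`
  have hreal : Tendsto ((↑) : ℝ → ℂ) (𝓝[≠] 0) (𝓝[≠] 0) :=
    tendsto_nhdsWithin_of_tendsto_nhds_of_eventually_within _
      ((Complex.continuous_ofReal.tendsto' 0 0 Complex.ofReal_zero).mono_left nhdsWithin_le_nhds)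
      (eventually_nhdsWithin_of_forall fun x hx ↦ by simpa using hx)
  refine hreal.frequently (Eventually.frequently ?_)
  filter_upwards [nhdsWithin_le_nhds (eventually_lt_nhds zero_lt_one)] with s hs
  exact integral_rpow_neg_mul_one_sub_rpow_div_one_sub_ofReal_mul hp hs

end Kernel

lemma div_rpow_one_add_mul_one_sub_rpow {x : ℝ} (hx : x ∈ Ioo (0 : ℝ) 1) (p : ℝ) :
    x / (x ^ (1 + p) * (1 - x) ^ (1 - p)) = x ^ (-p) * (1 - x) ^ (p - 1) := by
  have h1x : 0 < 1 - x := sub_pos.2 hx.2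
  rw [Real.rpow_add hx.1, Real.rpow_one, Real.rpow_neg hx.1.le, show p - 1 = -(1 - p) by ring,
    Real.rpow_neg h1x.le]
  field_simp
  rw [div_mul_eq_div_div, div_self hx.1.ne']

lemma one_div_one_sub_mul_sub_one_mul_ofReal {x : ℝ} (hx : x ∈ Ioo (0 : ℝ) 1) (p : ℝ)
    {z : ℂ} (hz : 1 - x * z ≠ 0) :
    (1 / (1 - (x : ℂ) * z) - 1) * ((1 / (Real.pi * x ^ (1 + p) * (1 - x) ^ (1 - p)) : ℝ) : ℂ)
      = z / Real.pi * (((x ^ (-p) * (1 - x) ^ (p - 1) : ℝ) : ℂ) / (1 - x * z)) := by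
  rw [← div_rpow_one_add_mul_one_sub_rpow hx]
  push_cast
  field_simp
  ring

theorem stmt11 (p : ℝ) (hp : p ∈ Set.Ioo (0 : ℝ) 1) (z : ℂ) (hz : z.im < 0) :
    (p : ℂ) * z * (1 - z) ^ ((p : ℂ) - 1)
      = (p : ℂ) * ((Real.sin ((1 - p) * Real.pi) : ℝ) : ℂ) *
          ∫ x in Set.Ioo (0 : ℝ) 1,
            (1 / (1 - (x : ℂ) * z) - 1) *
              ((1 / (Real.pi * x ^ (1 + p) * (1 - x) ^ (1 - p)) : ℝ) : ℂ) := by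
  have hzU : 1 - z ∈ slitPlane := Complex.mem_slitPlane_iff.2 (Or.inr (by simp; linarith))
  have hsin : Real.sin ((1 - p) * Real.pi) = Real.sin (Real.pi * p) := by
    rw [← Real.sin_pi_sub]; ring_nf
  have hsin_ne : ((Real.sin (Real.pi * p) : ℝ) : ℂ) ≠ 0 := Complex.ofReal_ne_zero.2
    (Real.sin_pos_of_pos_of_lt_pi (by nlinarith [Real.pi_pos, hp.1])
      (by nlinarith [Real.pi_pos, hp.2])).ne'
  have hpi_ne : ((Real.pi : ℝ) : ℂ) ≠ 0 := Complex.ofReal_ne_zero.2 Real.pi_ne_zero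
  rw [setIntegral_congr_fun measurableSet_Ioo fun x hx ↦
      one_div_one_sub_mul_sub_one_mul_ofReal hx p (Complex.slitPlane_ne_zero
        (one_sub_ofReal_mul_mem_slitPlane hzU (Ioo_subset_Icc_self hx))),
    integral_const_mul, integral_rpow_neg_mul_one_sub_rpow_div_one_sub_mul_eq_cpow hp hzU, hsin,
    Complex.ofReal_div]
  field_simp
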